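/- arXiv:2310.09804 — 3 statements merged into one kernel-verified Lean document; each statement's English description precedes it below -/
import Mathlib

section
/- (Recursion for gradient estimators under contractive compression in Byz-EF21-BC.) Suppose g_i^{t+1} = g_i^t + 𝒞_i^D(∇f_i(w^{t+1}) − g_i^t) for i ∈ 𝒢, where each 𝒞_i^D is a contractive compressor with parameter α_D applied conditionally. Then: (1/G) Σ_{i∈𝒢} E‖g_i^{t+1} − ∇f_i(x^{t+1})‖² ≤ (1 − α_D/4)·(1/G) Σ_{i∈𝒢} E‖g_i^t − ∇f_i(x^t)‖² + (8/α_D)(L±² + L²)·E‖x^{t+1} − x^t‖² + (10/α_D)(L±² + L²)·E‖x^{t+1} − w^{t+1}‖². -/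
/-!
Conditionally on the past, worker `i`'s new error is `(𝒞(z) - z) + (∇fᵢ(wᵗ⁺¹) - ∇fᵢ(xᵗ⁺¹))` with
`z = ∇fᵢ(wᵗ⁺¹) - gᵢᵗ`. Young's inequality and contraction bound its second moment by
`(1 + α/4)(1 - α)‖z‖² + (1 + 4/α)‖∇fᵢ(wᵗ⁺¹) - ∇fᵢ(xᵗ⁺¹)‖²`, and splitting `z` through `∇fᵢ(xᵗ)`
turns the first term into `(1 - α/4)‖gᵢᵗ - ∇fᵢ(xᵗ)‖²` plus a gradient difference. Averaged over
the workers, smoothness and the Hessian variance bound every mean squared gradient difference by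
`(L±² + L²)` times the squared distance of the points; Fubini then integrates over the past.
-/

open MeasureTheory Finset

lemma norm_add_sq_le_of_pos {E : Type*} [SeminormedAddCommGroup E] (a b : E) {t : ℝ}
    (ht : 0 < t) : ‖a + b‖ ^ 2 ≤ (1 + t) * ‖a‖ ^ 2 + (1 + 1 / t) * ‖b‖ ^ 2 := by
  have hgap : (1 + t) * ‖a‖ ^ 2 + (1 + 1 / t) * ‖b‖ ^ 2 - (‖a‖ + ‖b‖) ^ 2
      = (t * ‖a‖ - ‖b‖) ^ 2 / t := by
    field_simp
    ring
  calc ‖a + b‖ ^ 2 ≤ (‖a‖ + ‖b‖) ^ 2 := by gcongr; exact norm_add_le a b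
    _ ≤ _ := by linarith [div_nonneg (sq_nonneg (t * ‖a‖ - ‖b‖)) ht.le]

lemma mean_norm_sub_sq_le {ι E F : Type*} [Fintype ι] [SeminormedAddCommGroup E]
    [SeminormedAddCommGroup F] (G : ι → E → F) (Gbar : E → F) {L Lpm : ℝ}
    (hlip : ∀ x y, ‖Gbar x - Gbar y‖ ≤ L * ‖x - y‖)
    (hvar : ∀ x y, (1 / (Fintype.card ι : ℝ)) * ∑ i, ‖G i x - G i y‖ ^ 2
        - ‖Gbar x - Gbar y‖ ^ 2 ≤ Lpm ^ 2 * ‖x - y‖ ^ 2) (x y : E) :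
    (1 / (Fintype.card ι : ℝ)) * ∑ i, ‖G i x - G i y‖ ^ 2 ≤ (Lpm ^ 2 + L ^ 2) * ‖x - y‖ ^ 2 := by
  have hlip2 : ‖Gbar x - Gbar y‖ ^ 2 ≤ (L * ‖x - y‖) ^ 2 := by gcongr; exact hlip x y
  linarith [hvar x y, mul_pow L ‖x - y‖ 2]

/-- `C z ω` is the compression of `z` drawn with the randomness `ω ∼ ν`. -/
structure IsContractiveCompressor {Ω E : Type*} [MeasurableSpace Ω] [SeminormedAddCommGroup E]
    (ν : Measure Ω) (C : E → Ω → E) (α : ℝ) : Prop where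
  integrable : ∀ z, Integrable (fun ω => ‖C z ω - z‖ ^ 2) ν
  integral_le : ∀ z, ∫ ω, ‖C z ω - z‖ ^ 2 ∂ν ≤ (1 - α) * ‖z‖ ^ 2

namespace IsContractiveCompressor

variable {E : Type*} [SeminormedAddCommGroup E] {α : ℝ}

lemma comp_eval {ι : Type*} [Fintype ι] {Ω : ι → Type*} [∀ i, MeasurableSpace (Ω i)]
    {ν : ∀ i, Measure (Ω i)} [∀ i, IsProbabilityMeasure (ν i)] {i : ι}
    {C : E → Ω i → E} (hC : IsContractiveCompressor (ν i) C α) :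
    IsContractiveCompressor (Measure.pi ν) (fun z ω => C z (ω i)) α where
  integrable z := integrable_comp_eval (hC.integrable z)
  integral_le z := by
    rw [integral_comp_eval (hC.integrable z).aestronglyMeasurable]
    exact hC.integral_le z

variable {Ω : Type*} [MeasurableSpace Ω] {ν : Measure Ω} [IsProbabilityMeasure ν]
  {C : E → Ω → E}

lemma integral_norm_sub_add_sq_le (hC : IsContractiveCompressor ν C α)
    (z b : E) {t : ℝ} (ht : 0 < t) :
    ∫ ω, ‖C z ω - z + b‖ ^ 2 ∂ν ≤ (1 + t) * ((1 - α) * ‖z‖ ^ 2) + (1 + 1 / t) * ‖b‖ ^ 2 := by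
  calc ∫ ω, ‖C z ω - z + b‖ ^ 2 ∂ν
      ≤ ∫ ω, ((1 + t) * ‖C z ω - z‖ ^ 2 + (1 + 1 / t) * ‖b‖ ^ 2) ∂ν :=
        integral_mono_of_nonneg (.of_forall fun _ => by positivity)
          (((hC.integrable z).const_mul _).add (integrable_const _))
          (.of_forall fun ω => norm_add_sq_le_of_pos _ b ht)
    _ = (1 + t) * ∫ ω, ‖C z ω - z‖ ^ 2 ∂ν + (1 + 1 / t) * ‖b‖ ^ 2 := by
        rw [integral_add ((hC.integrable z).const_mul _) (integrable_const _), integral_const_mul,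
          integral_const, probReal_univ, one_smul]
    _ ≤ _ := by gcongr; exact hC.integral_le z

/-- For worker `i` of EF21: `g = gᵢᵗ`, `u = ∇fᵢ(wᵗ⁺¹)`, `v = ∇fᵢ(xᵗ)`, `w = ∇fᵢ(xᵗ⁺¹)`. -/
lemma integral_norm_update_sub_sq_le (hC : IsContractiveCompressor ν C α)
    (hα0 : 0 < α) (hα1 : α ≤ 1) (g u v w : E) :
    ∫ ω, ‖g + C (u - g) ω - w‖ ^ 2 ∂ν
      ≤ (1 - α / 4) * ‖g - v‖ ^ 2 + (2 / α) * ‖u - v‖ ^ 2 + (5 / α) * ‖u - w‖ ^ 2 := by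
  have hrw : ∀ ω, g + C (u - g) ω - w = C (u - g) ω - (u - g) + (u - w) := fun ω => by abel
  have hcomp := hC.integral_norm_sub_add_sq_le (u - g) (u - w) (by positivity : 0 < α / 4)
  have hsplit : ‖u - g‖ ^ 2 ≤ (1 + α / 2) * ‖g - v‖ ^ 2 + (1 + 1 / (α / 2)) * ‖u - v‖ ^ 2 := by
    have h := norm_add_sq_le_of_pos (v - g) (u - v) (t := α / 2) (by positivity)
    rwa [sub_add_sub_cancel', norm_sub_rev v g] at h
  have hk : 0 ≤ (1 + α / 4) * (1 - α) := mul_nonneg (by positivity) (by linarith)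
  have c1 : (1 + α / 4) * (1 - α) * (1 + α / 2) ≤ 1 - α / 4 := by nlinarith [sq_nonneg α]
  have c2 : (1 + α / 4) * (1 - α) * (1 + 1 / (α / 2)) ≤ 2 / α := by
    rw [one_div_div, le_div_iff₀ hα0]
    field_simp
    nlinarith [sq_nonneg α, mul_nonneg hα0.le (sq_nonneg α)]
  have c3 : 1 + 1 / (α / 4) ≤ 5 / α := by
    rw [one_div_div, le_div_iff₀ hα0]
    field_simp
    linarith
  have hsplit' := mul_le_mul_of_nonneg_left hsplit hk
  simp_rw [hrw]
  refine hcomp.trans ?_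
  rw [← mul_assoc]
  linarith [mul_le_mul_of_nonneg_right c1 (sq_nonneg ‖g - v‖),
    mul_le_mul_of_nonneg_right c2 (sq_nonneg ‖u - v‖),
    mul_le_mul_of_nonneg_right c3 (sq_nonneg ‖u - w‖)]

end IsContractiveCompressor

lemma mean_integral_norm_update_sub_sq_le {ι E F Ω : Type*} [Fintype ι]
    [SeminormedAddCommGroup E] [SeminormedAddCommGroup F] [MeasurableSpace Ω]
    (G : ι → E → F) (Gbar : E → F) {L Lpm : ℝ}
    (hlip : ∀ x y, ‖Gbar x - Gbar y‖ ≤ L * ‖x - y‖)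
    (hvar : ∀ x y, (1 / (Fintype.card ι : ℝ)) * ∑ i, ‖G i x - G i y‖ ^ 2
        - ‖Gbar x - Gbar y‖ ^ 2 ≤ Lpm ^ 2 * ‖x - y‖ ^ 2)
    {α : ℝ} (hα0 : 0 < α) (hα1 : α ≤ 1) {ν : Measure Ω} [IsProbabilityMeasure ν]
    {C : ι → F → Ω → F} (hC : ∀ i, IsContractiveCompressor ν (C i) α)
    (g : ι → F) (x x' w : E) :
    (1 / (Fintype.card ι : ℝ)) * ∑ i, ∫ ω, ‖g i + C i (G i w - g i) ω - G i x'‖ ^ 2 ∂ν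
      ≤ (1 - α / 4) * ((1 / (Fintype.card ι : ℝ)) * ∑ i, ‖g i - G i x‖ ^ 2)
        + (8 / α) * (Lpm ^ 2 + L ^ 2) * ‖x' - x‖ ^ 2
        + (10 / α) * (Lpm ^ 2 + L ^ 2) * ‖x' - w‖ ^ 2 := by
  have htri : ‖w - x‖ ^ 2 ≤ 2 * ‖x' - x‖ ^ 2 + 2 * ‖x' - w‖ ^ 2 := by
    have h := norm_add_sq_le_of_pos (w - x') (x' - x) one_pos
    rw [sub_add_sub_cancel, norm_sub_rev w x'] at h
    linarith
  have hfar := mean_norm_sub_sq_le G Gbar hlip hvar w x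
  have hnear := mean_norm_sub_sq_le G Gbar hlip hvar w x'
  rw [norm_sub_rev w x'] at hnear
  set N := 1 / (Fintype.card ι : ℝ)
  calc N * ∑ i, ∫ ω, ‖g i + C i (G i w - g i) ω - G i x'‖ ^ 2 ∂ν
      ≤ N * ∑ i, ((1 - α / 4) * ‖g i - G i x‖ ^ 2 + (2 / α) * ‖G i w - G i x‖ ^ 2
          + (5 / α) * ‖G i w - G i x'‖ ^ 2) := by
        gcongr with i
        exact (hC i).integral_norm_update_sub_sq_le hα0 hα1 (g i) (G i w) (G i x) (G i x')
    _ = (1 - α / 4) * (N * ∑ i, ‖g i - G i x‖ ^ 2) + (2 / α) * (N * ∑ i, ‖G i w - G i x‖ ^ 2)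
          + (5 / α) * (N * ∑ i, ‖G i w - G i x'‖ ^ 2) := by
        simp only [sum_add_distrib, ← mul_sum]
        ring
    _ ≤ (1 - α / 4) * (N * ∑ i, ‖g i - G i x‖ ^ 2)
          + (2 / α) * ((Lpm ^ 2 + L ^ 2) * (2 * ‖x' - x‖ ^ 2 + 2 * ‖x' - w‖ ^ 2))
          + (5 / α) * ((Lpm ^ 2 + L ^ 2) * ‖x' - w‖ ^ 2) := by
        gcongr _ + _ * ?_ + _ * ?_
        exact hfar.trans (by gcongr)
    _ ≤ _ := by
        rw [← sub_nonneg]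
        have hslack : (1 - α / 4) * (N * ∑ i, ‖g i - G i x‖ ^ 2)
              + (8 / α) * (Lpm ^ 2 + L ^ 2) * ‖x' - x‖ ^ 2
              + (10 / α) * (Lpm ^ 2 + L ^ 2) * ‖x' - w‖ ^ 2
            - ((1 - α / 4) * (N * ∑ i, ‖g i - G i x‖ ^ 2)
              + (2 / α) * ((Lpm ^ 2 + L ^ 2) * (2 * ‖x' - x‖ ^ 2 + 2 * ‖x' - w‖ ^ 2))
              + (5 / α) * ((Lpm ^ 2 + L ^ 2) * ‖x' - w‖ ^ 2))
            = (4 / α) * (Lpm ^ 2 + L ^ 2) * ‖x' - x‖ ^ 2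
              + (1 / α) * (Lpm ^ 2 + L ^ 2) * ‖x' - w‖ ^ 2 := by ring
        rw [hslack]
        positivity

theorem gradient_estimator_recursion_byz_ef21_bc_general
    {d : ℕ} {ι : Type*} [Fintype ι]
    -- local loss functions and their average
    (fS : ι → EuclideanSpace ℝ (Fin d) → ℝ)
    (f : EuclideanSpace ℝ (Fin d) → ℝ)
    -- L-smoothness of f
    (L : ℝ)
    (hsmooth : ∀ x y, ‖gradient f x - gradient f y‖ ≤ L * ‖x - y‖)
    -- global Hessian variance
    (Lpm : ℝ)
    (hGH : ∀ x y, (1 / (Fintype.card ι : ℝ)) *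
          ∑ i, ‖gradient (fS i) x - gradient (fS i) y‖ ^ 2
        - ‖gradient f x - gradient f y‖ ^ 2
      ≤ Lpm ^ 2 * ‖x - y‖ ^ 2)
    -- contractive compressors with parameter αD
    (αD : ℝ) (hαD0 : 0 < αD) (hαD1 : αD ≤ 1)
    {Ωc : ι → Type*} [∀ i, MeasurableSpace (Ωc i)]
    (νc : ∀ i, Measure (Ωc i)) [∀ i, IsProbabilityMeasure (νc i)]
    (C : (i : ι) → EuclideanSpace ℝ (Fin d) → Ωc i → EuclideanSpace ℝ (Fin d))
    (hCint : ∀ i z, Integrable (fun wc => ‖C i z wc - z‖ ^ 2) (νc i))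
    (hCcontr : ∀ i z, ∫ wc, ‖C i z wc - z‖ ^ 2 ∂(νc i) ≤ (1 - αD) * ‖z‖ ^ 2)
    -- past randomness and random vectors
    {Ω₀ : Type*} [MeasurableSpace Ω₀] (μ₀ : Measure Ω₀) [IsProbabilityMeasure μ₀]
    (xt xt1 wt1 : Ω₀ → EuclideanSpace ℝ (Fin d))
    (gt : ι → Ω₀ → EuclideanSpace ℝ (Fin d))
    -- the new estimators: compressed gradient differences applied conditionally
    (gt1 : ι → Ω₀ × (∀ i, Ωc i) → EuclideanSpace ℝ (Fin d))
    (hgt1 : ∀ i w, gt1 i w =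
      gt i w.1 + C i (gradient (fS i) (wt1 w.1) - gt i w.1) (w.2 i))
    -- integrability of the relevant squared norms
    (hint1 : ∀ i, Integrable
      (fun w : Ω₀ × (∀ i, Ωc i) => ‖gt1 i w - gradient (fS i) (xt1 w.1)‖ ^ 2)
      (μ₀.prod (Measure.pi νc)))
    (hint2 : ∀ i, Integrable
      (fun ω₀ => ‖gt i ω₀ - gradient (fS i) (xt ω₀)‖ ^ 2) μ₀)
    (hint3 : Integrable (fun ω₀ => ‖xt1 ω₀ - xt ω₀‖ ^ 2) μ₀)
    (hint4 : Integrable (fun ω₀ => ‖xt1 ω₀ - wt1 ω₀‖ ^ 2) μ₀) :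
    (1 / (Fintype.card ι : ℝ)) *
        ∑ i, ∫ w, ‖gt1 i w - gradient (fS i) (xt1 w.1)‖ ^ 2 ∂(μ₀.prod (Measure.pi νc))
      ≤ (1 - αD / 4) * ((1 / (Fintype.card ι : ℝ)) *
            ∑ i, ∫ ω₀, ‖gt i ω₀ - gradient (fS i) (xt ω₀)‖ ^ 2 ∂μ₀)
        + (8 / αD) * (Lpm ^ 2 + L ^ 2) * ∫ ω₀, ‖xt1 ω₀ - xt ω₀‖ ^ 2 ∂μ₀
        + (10 / αD) * (Lpm ^ 2 + L ^ 2) * ∫ ω₀, ‖xt1 ω₀ - wt1 ω₀‖ ^ 2 ∂μ₀ := by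
  have hC : ∀ i, IsContractiveCompressor (Measure.pi νc) (fun z w => C i z (w i)) αD :=
    fun i => IsContractiveCompressor.comp_eval ⟨hCint i, hCcontr i⟩
  have hmean := (integrable_finsetSum univ fun i _ => hint2 i).const_mul
    (1 / (Fintype.card ι : ℝ))
  calc _ = ∫ ω₀, (1 / (Fintype.card ι : ℝ)) *
        ∑ i, ∫ w, ‖gt1 i (ω₀, w) - gradient (fS i) (xt1 ω₀)‖ ^ 2 ∂(Measure.pi νc) ∂μ₀ := by
        rw [integral_const_mul, integral_finsetSum _ fun i _ => (hint1 i).integral_prod_left]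
        simp only [integral_prod _ (hint1 _)]
    _ ≤ ∫ ω₀, ((1 - αD / 4) * ((1 / (Fintype.card ι : ℝ)) *
            ∑ i, ‖gt i ω₀ - gradient (fS i) (xt ω₀)‖ ^ 2)
          + (8 / αD) * (Lpm ^ 2 + L ^ 2) * ‖xt1 ω₀ - xt ω₀‖ ^ 2
          + (10 / αD) * (Lpm ^ 2 + L ^ 2) * ‖xt1 ω₀ - wt1 ω₀‖ ^ 2) ∂μ₀ := by
        refine integral_mono
          ((integrable_finsetSum univ fun i _ => (hint1 i).integral_prod_left).const_mul _)
          (((hmean.const_mul _).fun_add (hint3.const_mul _)).fun_add (hint4.const_mul _))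
          fun ω₀ => ?_
        simpa only [hgt1] using mean_integral_norm_update_sub_sq_le (fun i => gradient (fS i))
          (gradient f) hsmooth hGH hαD0 hαD1 hC (fun i => gt i ω₀) (xt ω₀) (xt1 ω₀) (wt1 ω₀)
    _ = _ := by
        rw [integral_add ((hmean.const_mul _).fun_add (hint3.const_mul _)) (hint4.const_mul _),
          integral_add (hmean.const_mul _) (hint3.const_mul _), integral_const_mul,
          integral_const_mul, integral_const_mul, integral_const_mul,
          integral_finsetSum _ fun i _ => hint2 i]

/-- Recursion for the gradient estimators under contractive compression in Byz-EF21-BC. -/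
theorem gradient_estimator_recursion_byz_ef21_bc
    {d : ℕ} {ι : Type*} [Fintype ι]
    -- local loss functions and their average
    (fS : ι → EuclideanSpace ℝ (Fin d) → ℝ)
    (f : EuclideanSpace ℝ (Fin d) → ℝ)
    (hf : ∀ x, f x = (1 / (Fintype.card ι : ℝ)) * ∑ i, fS i x)
    (hdiff : ∀ i, Differentiable ℝ (fS i))
    -- L-smoothness of f
    (L : ℝ) (hL : 0 ≤ L)
    (hsmooth : ∀ x y, ‖gradient f x - gradient f y‖ ≤ L * ‖x - y‖)
    -- global Hessian variance
    (Lpm : ℝ) (hLpm : 0 ≤ Lpm)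
    (hGH : ∀ x y, (1 / (Fintype.card ι : ℝ)) *
          ∑ i, ‖gradient (fS i) x - gradient (fS i) y‖ ^ 2
        - ‖gradient f x - gradient f y‖ ^ 2
      ≤ Lpm ^ 2 * ‖x - y‖ ^ 2)
    -- contractive compressors with parameter αD
    (αD : ℝ) (hαD0 : 0 < αD) (hαD1 : αD ≤ 1)
    {Ωc : ι → Type*} [∀ i, MeasurableSpace (Ωc i)]
    (νc : ∀ i, Measure (Ωc i)) [∀ i, IsProbabilityMeasure (νc i)]
    (C : (i : ι) → EuclideanSpace ℝ (Fin d) → Ωc i → EuclideanSpace ℝ (Fin d))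
    (hCmeas : ∀ i, Measurable fun q : EuclideanSpace ℝ (Fin d) × Ωc i => C i q.1 q.2)
    (hCint : ∀ i z, Integrable (fun wc => ‖C i z wc - z‖ ^ 2) (νc i))
    (hCcontr : ∀ i z, ∫ wc, ‖C i z wc - z‖ ^ 2 ∂(νc i) ≤ (1 - αD) * ‖z‖ ^ 2)
    -- past randomness and random vectors
    {Ω₀ : Type*} [MeasurableSpace Ω₀] (μ₀ : Measure Ω₀) [IsProbabilityMeasure μ₀]
    (xt xt1 wt1 : Ω₀ → EuclideanSpace ℝ (Fin d))
    (gt : ι → Ω₀ → EuclideanSpace ℝ (Fin d))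
    (hxtm : Measurable xt) (hxt1m : Measurable xt1) (hwt1m : Measurable wt1)
    (hgtm : ∀ i, Measurable (gt i))
    -- the new estimators: compressed gradient differences applied conditionally
    (gt1 : ι → Ω₀ × (∀ i, Ωc i) → EuclideanSpace ℝ (Fin d))
    (hgt1 : ∀ i w, gt1 i w =
      gt i w.1 + C i (gradient (fS i) (wt1 w.1) - gt i w.1) (w.2 i))
    -- integrability of the relevant squared norms
    (hint1 : ∀ i, Integrable
      (fun w : Ω₀ × (∀ i, Ωc i) => ‖gt1 i w - gradient (fS i) (xt1 w.1)‖ ^ 2)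
      (μ₀.prod (Measure.pi νc)))
    (hint2 : ∀ i, Integrable
      (fun ω₀ => ‖gt i ω₀ - gradient (fS i) (xt ω₀)‖ ^ 2) μ₀)
    (hint3 : Integrable (fun ω₀ => ‖xt1 ω₀ - xt ω₀‖ ^ 2) μ₀)
    (hint4 : Integrable (fun ω₀ => ‖xt1 ω₀ - wt1 ω₀‖ ^ 2) μ₀) :
    (1 / (Fintype.card ι : ℝ)) *
        ∑ i, ∫ w, ‖gt1 i w - gradient (fS i) (xt1 w.1)‖ ^ 2 ∂(μ₀.prod (Measure.pi νc))
      ≤ (1 - αD / 4) * ((1 / (Fintype.card ι : ℝ)) *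
            ∑ i, ∫ ω₀, ‖gt i ω₀ - gradient (fS i) (xt ω₀)‖ ^ 2 ∂μ₀)
        + (8 / αD) * (Lpm ^ 2 + L ^ 2) * ∫ ω₀, ‖xt1 ω₀ - xt ω₀‖ ^ 2 ∂μ₀
        + (10 / αD) * (Lpm ^ 2 + L ^ 2) * ∫ ω₀, ‖xt1 ω₀ - wt1 ω₀‖ ^ 2 ∂μ₀ :=
  gradient_estimator_recursion_byz_ef21_bc_general fS f L hsmooth Lpm hGH αD hαD0 hαD1 νc C hCint
    hCcontr μ₀ xt xt1 wt1 gt gt1 hgt1 hint1 hint2 hint3 hint4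
end

section
/- (Recursion for the server-side model shift under contractive compression.) Suppose w^{t+1} = w^t + 𝒞^P(x^{t+1} − w^t) where 𝒞^P is a contractive compressor with parameter α_P applied conditionally. Then: E‖w^{t+1} − x^{t+1}‖² ≤ (1 − α_P/2)·E‖w^t − x^t‖² + (2/α_P)·E‖x^{t+1} − x^t‖². -/
open MeasureTheory

-- Young's inequality `(x + y)² ≤ (1 + α/2) x² + (1 + 2/α) y²`, times `1 - α`.
theorem one_sub_mul_add_sq_le {α : ℝ} (hα0 : 0 < α) (hα1 : α ≤ 1) (x y : ℝ) :
    (1 - α) * (x + y) ^ 2 ≤ (1 - α / 2) * x ^ 2 + (2 / α) * y ^ 2 := by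
  have key : α * ((1 - α) * (x + y) ^ 2) ≤ α * ((1 - α / 2) * x ^ 2 + (2 / α) * y ^ 2) := by
    rw [mul_add, ← mul_assoc α (2 / α), mul_div_cancel₀ _ hα0.ne']
    nlinarith [sq_nonneg (α * x - 2 * (1 - α) * y),
      mul_nonneg (mul_nonneg hα0.le (by linarith : (0 : ℝ) ≤ 3 - α)) (sq_nonneg y)]
  exact le_of_mul_le_mul_left key hα0

theorem integral_prod_le_of_integral_le {α β : Type*} [MeasurableSpace α] [MeasurableSpace β]
    {μ : Measure α} {ν : Measure β} [SFinite μ] [SFinite ν] {f : α × β → ℝ} {g : α → ℝ}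
    (hf : Integrable f (μ.prod ν)) (hg : Integrable g μ) (h : ∀ a, ∫ b, f (a, b) ∂ν ≤ g a) :
    ∫ p, f p ∂(μ.prod ν) ≤ ∫ a, g a ∂μ := by
  rw [integral_prod _ hf]
  exact integral_mono hf.integral_prod_left hg h

theorem integral_norm_compressed_shift_sub_sq_le {E Ω : Type*} [SeminormedAddCommGroup E]
    [MeasurableSpace Ω] {ν : Measure Ω} {α : ℝ} (hα0 : 0 < α) (hα1 : α ≤ 1)
    {C : E → Ω → E} (hC : ∀ z, ∫ c, ‖C z c - z‖ ^ 2 ∂ν ≤ (1 - α) * ‖z‖ ^ 2) (w x x' : E) :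
    ∫ c, ‖w + C (x' - w) c - x'‖ ^ 2 ∂ν
      ≤ (1 - α / 2) * ‖w - x‖ ^ 2 + (2 / α) * ‖x' - x‖ ^ 2 := by
  have hshift : ∀ c, w + C (x' - w) c - x' = C (x' - w) c - (x' - w) := fun c => by abel
  have htriangle : ‖x' - w‖ ≤ ‖w - x‖ + ‖x' - x‖ :=
    (norm_sub_le_norm_sub_add_norm_sub x' x w).trans_eq (by rw [add_comm, norm_sub_rev x w])
  calc ∫ c, ‖w + C (x' - w) c - x'‖ ^ 2 ∂ν
      = ∫ c, ‖C (x' - w) c - (x' - w)‖ ^ 2 ∂ν := by simp_rw [hshift]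
    _ ≤ (1 - α) * ‖x' - w‖ ^ 2 := hC _
    _ ≤ (1 - α) * (‖w - x‖ + ‖x' - x‖) ^ 2 := by gcongr
    _ ≤ (1 - α / 2) * ‖w - x‖ ^ 2 + (2 / α) * ‖x' - x‖ ^ 2 := one_sub_mul_add_sq_le hα0 hα1 _ _

theorem server_shift_recursion_contractive_general
    {d : ℕ}
    -- contractive compressor with parameter αP
    (αP : ℝ) (hαP0 : 0 < αP) (hαP1 : αP ≤ 1)
    {Ωc : Type*} [MeasurableSpace Ωc] (νc : Measure Ωc) [IsProbabilityMeasure νc]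
    (C : EuclideanSpace ℝ (Fin d) → Ωc → EuclideanSpace ℝ (Fin d))
    (hCcontr : ∀ z, ∫ wc, ‖C z wc - z‖ ^ 2 ∂νc ≤ (1 - αP) * ‖z‖ ^ 2)
    -- past randomness and random vectors
    {Ω₀ : Type*} [MeasurableSpace Ω₀] (μ₀ : Measure Ω₀) [IsProbabilityMeasure μ₀]
    (xt xt1 wt : Ω₀ → EuclideanSpace ℝ (Fin d))
    -- the new server-side model: compressed model shift applied conditionally
    (wt1 : Ω₀ × Ωc → EuclideanSpace ℝ (Fin d))
    (hwt1 : ∀ w, wt1 w = wt w.1 + C (xt1 w.1 - wt w.1) w.2)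
    -- integrability of the relevant squared norms
    (hint1 : Integrable
      (fun w : Ω₀ × Ωc => ‖wt1 w - xt1 w.1‖ ^ 2) (μ₀.prod νc))
    (hint2 : Integrable (fun ω₀ => ‖wt ω₀ - xt ω₀‖ ^ 2) μ₀)
    (hint3 : Integrable (fun ω₀ => ‖xt1 ω₀ - xt ω₀‖ ^ 2) μ₀) :
    ∫ w, ‖wt1 w - xt1 w.1‖ ^ 2 ∂(μ₀.prod νc)
      ≤ (1 - αP / 2) * ∫ ω₀, ‖wt ω₀ - xt ω₀‖ ^ 2 ∂μ₀
        + (2 / αP) * ∫ ω₀, ‖xt1 ω₀ - xt ω₀‖ ^ 2 ∂μ₀ := by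
  have hint2' := hint2.const_mul (1 - αP / 2)
  have hint3' := hint3.const_mul (2 / αP)
  calc ∫ w, ‖wt1 w - xt1 w.1‖ ^ 2 ∂(μ₀.prod νc)
      ≤ ∫ ω₀, ((1 - αP / 2) * ‖wt ω₀ - xt ω₀‖ ^ 2 + (2 / αP) * ‖xt1 ω₀ - xt ω₀‖ ^ 2) ∂μ₀ :=
        integral_prod_le_of_integral_le hint1 (hint2'.add hint3') fun ω₀ => by
          simpa only [hwt1] using
            integral_norm_compressed_shift_sub_sq_le hαP0 hαP1 hCcontr (wt ω₀) (xt ω₀) (xt1 ω₀)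
    _ = _ := by rw [integral_add hint2' hint3', integral_const_mul, integral_const_mul]

/-- Recursion for the server-side model shift under contractive compression. -/
theorem server_shift_recursion_contractive
    {d : ℕ}
    -- contractive compressor with parameter αP
    (αP : ℝ) (hαP0 : 0 < αP) (hαP1 : αP ≤ 1)
    {Ωc : Type*} [MeasurableSpace Ωc] (νc : Measure Ωc) [IsProbabilityMeasure νc]
    (C : EuclideanSpace ℝ (Fin d) → Ωc → EuclideanSpace ℝ (Fin d))
    (hCmeas : Measurable fun q : EuclideanSpace ℝ (Fin d) × Ωc => C q.1 q.2)
    (hCint : ∀ z, Integrable (fun wc => ‖C z wc - z‖ ^ 2) νc)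
    (hCcontr : ∀ z, ∫ wc, ‖C z wc - z‖ ^ 2 ∂νc ≤ (1 - αP) * ‖z‖ ^ 2)
    -- past randomness and random vectors
    {Ω₀ : Type*} [MeasurableSpace Ω₀] (μ₀ : Measure Ω₀) [IsProbabilityMeasure μ₀]
    (xt xt1 wt : Ω₀ → EuclideanSpace ℝ (Fin d))
    (hxtm : Measurable xt) (hxt1m : Measurable xt1) (hwtm : Measurable wt)
    -- the new server-side model: compressed model shift applied conditionally
    (wt1 : Ω₀ × Ωc → EuclideanSpace ℝ (Fin d))
    (hwt1 : ∀ w, wt1 w = wt w.1 + C (xt1 w.1 - wt w.1) w.2)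
    -- integrability of the relevant squared norms
    (hint1 : Integrable
      (fun w : Ω₀ × Ωc => ‖wt1 w - xt1 w.1‖ ^ 2) (μ₀.prod νc))
    (hint2 : Integrable (fun ω₀ => ‖wt ω₀ - xt ω₀‖ ^ 2) μ₀)
    (hint3 : Integrable (fun ω₀ => ‖xt1 ω₀ - xt ω₀‖ ^ 2) μ₀) :
    ∫ w, ‖wt1 w - xt1 w.1‖ ^ 2 ∂(μ₀.prod νc)
      ≤ (1 - αP / 2) * ∫ ω₀, ‖wt ω₀ - xt ω₀‖ ^ 2 ∂μ₀
        + (2 / αP) * ∫ ω₀, ‖xt1 ω₀ - xt ω₀‖ ^ 2 ∂μ₀ :=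
  server_shift_recursion_contractive_general αP hαP0 hαP1 νc C hCcontr μ₀ xt xt1 wt wt1 hwt1 hint1
    hint2 hint3
end

section
/- (Lyapunov coefficient inequalities for Byz-DASHA-PAGE under PŁ.) Let ω ≥ 0, 0 < a ≤ 1/(2ω+1), s > 0, c, δ ≥ 0, B ≥ 0, G > 0, p ∈ (0,1], μ > 0, κ = 1 − 8Bcδ(1+s) > 0, and 0 < γ < min{p/(2μκ), a/(2μκ)}. Then the values C = 2(1+s^{−1})/(1 − (1−a)² − a/2), D = (16(1+s)cδ + (2ωa²/G)C)/(1 − 2ωa² − (1−a)² − a/2), E = 4(1+s^{−1})/p, F = 8ω(C/G + D) + 32cδ(1+s)/p are nonnegative and satisfy: (1−γμκ)C ≥ (1−a)²C + 2(1+s^{−1}); (1−γμκ)D ≥ (2a²ω + (1−a)²)D + (2a²ω/G)C + 16cδ(1+s); (1−γμκ)E ≥ (1−p)E + 2(1+s^{−1}); (1−γμκ)F ≥ (1−p)F + 4pω(C/G + D) + 16cδ(1+s). Moreover, C/G + D = (2/(1 − 2ωa² − (1−a)² − a/2))·((1+s^{−1})/G + 8cδ(1+s)) and E/G + F = (16ω/(1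 − 2ωa² − (1−a)² − a/2) + 4/p)·((1+s^{−1})/G + 8cδ(1+s)). -/
set_option maxHeartbeats 1000000 in
/-- Lyapunov coefficient inequalities for Byz-DASHA-PAGE under the PŁ condition. -/
theorem lyapunov_system_inequalities_byz_dasha_page_pl
    (omg a s c δ B G p μ κ γ : ℝ)
    (homg : 0 ≤ omg) (ha0 : 0 < a) (ha1 : a ≤ 1 / (2 * omg + 1)) (hs : 0 < s)
    (hc : 0 ≤ c) (hδ : 0 ≤ δ) (hB : 0 ≤ B) (hG : 0 < G) (hp0 : 0 < p) (hp1 : p ≤ 1)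
    (hμ : 0 < μ)
    (hκ : κ = 1 - 8 * B * c * δ * (1 + s)) (hκpos : 0 < κ)
    (hγ0 : 0 < γ) (hγ : γ < min (p / (2 * μ * κ)) (a / (2 * μ * κ)))
    (C D E F : ℝ)
    (hC : C = 2 * (1 + s⁻¹) / (1 - (1 - a) ^ 2 - a / 2))
    (hD : D = (16 * (1 + s) * c * δ + (2 * omg * a ^ 2 / G) * C) /
      (1 - 2 * omg * a ^ 2 - (1 - a) ^ 2 - a / 2))
    (hE : E = 4 * (1 + s⁻¹) / p)
    (hF : F = 8 * omg * (C / G + D) + 32 * c * δ * (1 + s) / p) :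
    (0 ≤ C ∧ 0 ≤ D ∧ 0 ≤ E ∧ 0 ≤ F)
    ∧ (1 - a) ^ 2 * C + 2 * (1 + s⁻¹) ≤ (1 - γ * μ * κ) * C
    ∧ (2 * a ^ 2 * omg + (1 - a) ^ 2) * D + (2 * a ^ 2 * omg / G) * C
        + 16 * c * δ * (1 + s) ≤ (1 - γ * μ * κ) * D
    ∧ (1 - p) * E + 2 * (1 + s⁻¹) ≤ (1 - γ * μ * κ) * E
    ∧ (1 - p) * F + 4 * p * omg * (C / G + D) + 16 * c * δ * (1 + s)
        ≤ (1 - γ * μ * κ) * F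
    ∧ C / G + D = (2 / (1 - 2 * omg * a ^ 2 - (1 - a) ^ 2 - a / 2)) *
        ((1 + s⁻¹) / G + 8 * c * δ * (1 + s))
    ∧ E / G + F = (16 * omg / (1 - 2 * omg * a ^ 2 - (1 - a) ^ 2 - a / 2) + 4 / p) *
        ((1 + s⁻¹) / G + 8 * c * δ * (1 + s)) := by
  have h2ω : (0:ℝ) < 2 * omg + 1 := by linarith
  have haω : a * (2 * omg + 1) ≤ 1 := (le_div_iff₀ h2ω).mp ha1
  have ha_le1 : a ≤ 1 := by nlinarith
  have hd1pos : 0 < 1 - (1 - a) ^ 2 - a / 2 := by nlinarith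
  have hd2ge : a / 2 ≤ 1 - 2 * omg * a ^ 2 - (1 - a) ^ 2 - a / 2 := by
    nlinarith [mul_le_mul_of_nonneg_left haω ha0.le]
  have hd2pos : 0 < 1 - 2 * omg * a ^ 2 - (1 - a) ^ 2 - a / 2 := by linarith
  have hμκ : 0 < μ * κ := mul_pos hμ hκpos
  have hta : γ * μ * κ < a / 2 := by
    have h := lt_of_lt_of_le hγ (min_le_right _ _)
    rw [lt_div_iff₀ (by linarith : (0:ℝ) < 2 * μ * κ)] at h
    have h2 : γ * (2 * μ * κ) = 2 * (γ * μ * κ) := by ring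
    linarith
  have htp : γ * μ * κ < p / 2 := by
    have h := lt_of_lt_of_le hγ (min_le_left _ _)
    rw [lt_div_iff₀ (by linarith : (0:ℝ) < 2 * μ * κ)] at h
    have h2 : γ * (2 * μ * κ) = 2 * (γ * μ * κ) := by ring
    linarith
  have hsi : (0:ℝ) < 1 + s⁻¹ := by positivity
  have hC0 : 0 ≤ C := by
    rw [hC]; exact div_nonneg (by positivity) hd1pos.le
  have hX0 : 0 ≤ 16 * (1 + s) * c * δ + (2 * omg * a ^ 2 / G) * C := by positivity
  have hD0 : 0 ≤ D := by
    rw [hD]; exact div_nonneg hX0 hd2pos.le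
  have hE0 : 0 ≤ E := by rw [hE]; positivity
  have hCG0 : 0 ≤ C / G + D := by positivity
  have hF0 : 0 ≤ F := by rw [hF]; positivity
  have hCd1 : C * (1 - (1 - a) ^ 2 - a / 2) = 2 * (1 + s⁻¹) := by
    rw [hC, div_mul_cancel₀ _ hd1pos.ne']
  have hDd2 : D * (1 - 2 * omg * a ^ 2 - (1 - a) ^ 2 - a / 2)
      = 16 * (1 + s) * c * δ + (2 * omg * a ^ 2 / G) * C := by
    rw [hD, div_mul_cancel₀ _ hd2pos.ne']
  have hEp : E * p = 4 * (1 + s⁻¹) := by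
    rw [hE, div_mul_cancel₀ _ hp0.ne']
  have hFp : F * p = 8 * omg * (C / G + D) * p + 32 * c * δ * (1 + s) := by
    rw [hF, add_mul, div_mul_cancel₀ _ hp0.ne']
  refine ⟨⟨hC0, hD0, hE0, hF0⟩, ?_, ?_, ?_, ?_, ?_, ?_⟩
  · calc (1 - a) ^ 2 * C + 2 * (1 + s⁻¹) = (1 - a / 2) * C := by
          linear_combination -hCd1
      _ ≤ (1 - γ * μ * κ) * C :=
          mul_le_mul_of_nonneg_right (by linarith) hC0
  · calc (2 * a ^ 2 * omg + (1 - a) ^ 2) * D + (2 * a ^ 2 * omg / G) * C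
        + 16 * c * δ * (1 + s) = (1 - a / 2) * D := by
          linear_combination -hDd2
      _ ≤ (1 - γ * μ * κ) * D :=
          mul_le_mul_of_nonneg_right (by linarith) hD0
  · calc (1 - p) * E + 2 * (1 + s⁻¹) = (1 - p / 2) * E := by
          linear_combination -hEp / 2
      _ ≤ (1 - γ * μ * κ) * E :=
          mul_le_mul_of_nonneg_right (by linarith) hE0
  · calc (1 - p) * F + 4 * p * omg * (C / G + D) + 16 * c * δ * (1 + s)
        = (1 - p / 2) * F := by linear_combination -hFp / 2
      _ ≤ (1 - γ * μ * κ) * F :=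
          mul_le_mul_of_nonneg_right (by linarith) hF0
  · rw [div_mul_eq_mul_div, eq_div_iff hd2pos.ne']
    linear_combination hDd2 + hCd1 / G
  · have id5 : C / G + D = 2 / (1 - 2 * omg * a ^ 2 - (1 - a) ^ 2 - a / 2) *
        ((1 + s⁻¹) / G + 8 * c * δ * (1 + s)) := by
      rw [div_mul_eq_mul_div, eq_div_iff hd2pos.ne']
      linear_combination hDd2 + hCd1 / G
    rw [hF, hE]
    linear_combination (8 * omg) * id5
end
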